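/- Let f_A, f_B : ℝⁿ → [0,1] be measurable with Weierstrass transforms f̂_A, f̂_B taking values in (0,1). Fix x ∈ ℝⁿ and let p_A = f̂_A(x), p_B = f̂_B(x) with p_B ≤ p_A. Then for any perturbation δ ∈ ℝⁿ such that f̂_A(x + δ) ≤ f̂_B(x + δ), one has ‖δ‖₂ ≥ (1/2)(Φ⁻¹(p_A) - Φ⁻¹(p_B)). -/

import Mathlib

/-!
Neyman–Pearson. Write `u = δ / ‖δ‖`. Relative to `N(0, I)`, the shifted Gaussian `N(δ, I)` has
likelihood ratio `exp (⟪δ, s⟫ - ‖δ‖² / 2)`, an increasing function of `⟪u, s⟫`. Hence among all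
tests `f : ℝⁿ → [0,1]` with `f̂(x) = Φ a`, the indicator of the half-space `{⟪u, s⟫ ≤ a}` has the
smallest value `Φ (a - ‖δ‖)` at `x + δ`, and the indicator of `{⟪u, s⟫ ≥ -a}` the largest value
`Φ (a + ‖δ‖)`. With `a = Φ⁻¹ p_A` and `b = Φ⁻¹ p_B` this gives
`Φ (a - ‖δ‖) ≤ f̂_A (x + δ) ≤ f̂_B (x + δ) ≤ Φ (b + ‖δ‖)`, so `a - ‖δ‖ ≤ b + ‖δ‖`.

The Gaussian mass of a half-space is read off from Mathlib's `ProbabilityTheory.stdGaussian`,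
whose image under a unit linear functional is `gaussianReal 0 1`; `stdGaussian n` is identified
with it by comparing both on boxes, where the density factorizes.
-/

open MeasureTheory Real

/-- The standard `n`-dimensional Gaussian measure `N(0, Iₙ)`, with density
`(2π)^{-n/2} exp(-‖t‖²/2)` with respect to Lebesgue measure. -/
noncomputable def stdGaussian (n : ℕ) : Measure (EuclideanSpace ℝ (Fin n)) :=
  volume.withDensity fun t =>
    ENNReal.ofReal ((2 * π) ^ (-(n : ℝ) / 2) * Real.exp (-‖t‖ ^ 2 / 2))

/-- The standard Gaussian CDF `Φ(a) = (1/√(2π)) ∫_{-∞}^a exp(-s²/2) ds`. -/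
noncomputable def stdGaussianCDF (a : ℝ) : ℝ :=
  (Real.sqrt (2 * π))⁻¹ * ∫ s in Set.Iic a, Real.exp (-s ^ 2 / 2)

/-- The inverse `Φ⁻¹ : (0,1) → ℝ` of the standard Gaussian CDF. -/
noncomputable def stdGaussianCDFInv : ℝ → ℝ :=
  Function.invFun stdGaussianCDF

open scoped RealInnerProductSpace
open ProbabilityTheory (gaussianReal gaussianPDFReal)

lemma Set.indicator_one_mem_Icc {α : Type*} (S : Set α) (s : α) :
    S.indicator (1 : α → ℝ) s ∈ Set.Icc 0 1 := by
  by_cases hs : s ∈ S <;> simp [hs]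

lemma exists_norm_eq_one_inner_eq_norm_mul {E : Type*} [NormedAddCommGroup E]
    [InnerProductSpace ℝ E] {δ : E} (hδ : δ ≠ 0) :
    ∃ u : E, ‖u‖ = 1 ∧ ∀ s, ⟪δ, s⟫ = ‖δ‖ * ⟪u, s⟫ := by
  refine ⟨‖δ‖⁻¹ • δ, by simp [norm_smul, hδ], fun s => ?_⟩
  rw [real_inner_smul_left, mul_inv_cancel_left₀ (norm_ne_zero_iff.2 hδ)]

section NeymanPearson

variable {α : Type*} [MeasurableSpace α] {μ : Measure α}

lemma integrable_mul_of_mem_Icc {g p : α → ℝ} (hp : Integrable p μ)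
    (hg : AEStronglyMeasurable g μ) (hg01 : ∀ s, g s ∈ Set.Icc 0 1) :
    Integrable (fun s => g s * p s) μ :=
  hp.bdd_mul hg (c := 1) (ae_of_all _ fun s => by
    rw [Real.norm_eq_abs, abs_of_nonneg (hg01 s).1]; exact (hg01 s).2)

lemma integral_mul_le_integral_mul_of_sign {g h p q : α → ℝ} {L : ℝ} (hL : 0 ≤ L)
    (hp : Integrable p μ) (hq : Integrable q μ)
    (hg : AEStronglyMeasurable g μ) (hh : AEStronglyMeasurable h μ)
    (hg01 : ∀ s, g s ∈ Set.Icc 0 1) (hh01 : ∀ s, h s ∈ Set.Icc 0 1)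
    (hsign : ∀ s, (g s - h s) * (q s - L * p s) ≤ 0)
    (hgh : ∫ s, g s * p s ∂μ ≤ ∫ s, h s * p s ∂μ) :
    ∫ s, g s * q s ∂μ ≤ ∫ s, h s * q s ∂μ := by
  have hgp := integrable_mul_of_mem_Icc hp hg hg01
  have hhp := integrable_mul_of_mem_Icc hp hh hh01
  have hgq := integrable_mul_of_mem_Icc hq hg hg01
  have hhq := integrable_mul_of_mem_Icc hq hh hh01
  have hexpand : ∫ s, (g s - h s) * (q s - L * p s) ∂μ =
      (∫ s, g s * q s ∂μ - ∫ s, h s * q s ∂μ) -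
        L * (∫ s, g s * p s ∂μ - ∫ s, h s * p s ∂μ) := by
    have hpt : ∀ s, (g s - h s) * (q s - L * p s) =
        (g s * q s - h s * q s) - L * (g s * p s - h s * p s) := fun s => by ring
    have hq' : Integrable (fun s => g s * q s - h s * q s) μ := hgq.sub hhq
    have hp' : Integrable (fun s => L * (g s * p s - h s * p s)) μ := (hgp.sub hhp).const_mul L
    simp_rw [hpt]
    rw [integral_sub hq' hp', integral_sub hgq hhq, integral_const_mul, integral_sub hgp hhp]
  have hnonpos : ∫ s, (g s - h s) * (q s - L * p s) ∂μ ≤ 0 := integral_nonpos hsign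
  rw [hexpand] at hnonpos
  nlinarith [mul_nonneg hL (sub_nonneg.2 hgh)]

lemma integral_indicator_one_mul {S : Set α} (hS : MeasurableSet S) (p : α → ℝ) :
    ∫ s, S.indicator 1 s * p s ∂μ = ∫ s in S, p s ∂μ := by
  simp_rw [← Set.indicator_mul_left, Pi.one_apply, one_mul]
  exact integral_indicator hS

variable {S : Set α} {f p q : α → ℝ} {L : ℝ}

lemma neyman_pearson_lower (hS : MeasurableSet S) (hL : 0 ≤ L) (hp : Integrable p μ)
    (hq : Integrable q μ) (hf : AEStronglyMeasurable f μ) (hf01 : ∀ s, f s ∈ Set.Icc 0 1)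
    (hin : ∀ s ∈ S, q s ≤ L * p s) (hout : ∀ s ∉ S, L * p s ≤ q s)
    (hmass : ∫ s in S, p s ∂μ ≤ ∫ s, f s * p s ∂μ) :
    ∫ s in S, q s ∂μ ≤ ∫ s, f s * q s ∂μ := by
  rw [← integral_indicator_one_mul hS] at hmass ⊢
  refine integral_mul_le_integral_mul_of_sign hL hp hq
    (measurable_one.indicator hS).aestronglyMeasurable hf S.indicator_one_mem_Icc hf01
    (fun s => ?_) hmass
  by_cases hs : s ∈ S
  · rw [Set.indicator_of_mem hs, Pi.one_apply]
    exact mul_nonpos_of_nonneg_of_nonpos (sub_nonneg.2 (hf01 s).2) (sub_nonpos.2 (hin s hs))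
  · rw [Set.indicator_of_notMem hs, zero_sub]
    exact mul_nonpos_of_nonpos_of_nonneg (neg_nonpos.2 (hf01 s).1) (sub_nonneg.2 (hout s hs))

lemma neyman_pearson_upper (hS : MeasurableSet S) (hL : 0 ≤ L) (hp : Integrable p μ)
    (hq : Integrable q μ) (hf : AEStronglyMeasurable f μ) (hf01 : ∀ s, f s ∈ Set.Icc 0 1)
    (hin : ∀ s ∈ S, L * p s ≤ q s) (hout : ∀ s ∉ S, q s ≤ L * p s)
    (hmass : ∫ s, f s * p s ∂μ ≤ ∫ s in S, p s ∂μ) :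
    ∫ s, f s * q s ∂μ ≤ ∫ s in S, q s ∂μ := by
  rw [← integral_indicator_one_mul hS] at hmass ⊢
  refine integral_mul_le_integral_mul_of_sign hL hp hq hf
    (measurable_one.indicator hS).aestronglyMeasurable hf01 S.indicator_one_mem_Icc
    (fun s => ?_) hmass
  by_cases hs : s ∈ S
  · rw [Set.indicator_of_mem hs, Pi.one_apply]
    exact mul_nonpos_of_nonpos_of_nonneg (sub_nonpos.2 (hf01 s).2) (sub_nonneg.2 (hin s hs))
  · rw [Set.indicator_of_notMem hs, sub_zero]
    exact mul_nonpos_of_nonneg_of_nonpos (hf01 s).1 (sub_nonpos.2 (hout s hs))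

end NeymanPearson

section StdGaussianCDF

open ProbabilityTheory

lemma stdGaussianCDF_eq_setIntegral (a : ℝ) :
    stdGaussianCDF a = ∫ x in Set.Iic a, gaussianPDFReal 0 1 x := by
  simp [stdGaussianCDF, gaussianPDFReal_def, integral_const_mul]

lemma stdGaussianCDF_eq_measureReal (a : ℝ) :
    stdGaussianCDF a = (gaussianReal 0 1).real (Set.Iic a) := by
  rw [measureReal_def, gaussianReal_apply_eq_integral _ one_ne_zero,
    ENNReal.toReal_ofReal (integral_nonneg fun x => gaussianPDFReal_nonneg 0 1 x),
    stdGaussianCDF_eq_setIntegral]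

lemma stdGaussianCDF_eq_cdf : stdGaussianCDF = cdf (gaussianReal 0 1) :=
  funext fun a => (stdGaussianCDF_eq_measureReal a).trans (cdf_eq_real _ a).symm

lemma stdGaussianCDF_sub_stdGaussianCDF (a b : ℝ) :
    stdGaussianCDF b - stdGaussianCDF a = ∫ x in a..b, gaussianPDFReal 0 1 x := by
  simp only [stdGaussianCDF_eq_setIntegral]
  exact intervalIntegral.integral_Iic_sub_Iic (integrable_gaussianPDFReal 0 1).integrableOn
    (integrable_gaussianPDFReal 0 1).integrableOn

lemma stdGaussianCDF_strictMono : StrictMono stdGaussianCDF := fun a b hab => by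
  rw [← sub_pos, stdGaussianCDF_sub_stdGaussianCDF]
  exact intervalIntegral.intervalIntegral_pos_of_pos
    (integrable_gaussianPDFReal 0 1).intervalIntegrable
    (fun x => gaussianPDFReal_pos 0 1 x one_ne_zero) hab

lemma continuous_stdGaussianCDF : Continuous stdGaussianCDF := by
  have h : stdGaussianCDF =
      fun b => stdGaussianCDF 0 + ∫ x in (0 : ℝ)..b, gaussianPDFReal 0 1 x := by
    ext b
    rw [← stdGaussianCDF_sub_stdGaussianCDF, add_sub_cancel]
  rw [h]
  exact continuous_const.add ((integrable_gaussianPDFReal 0 1).continuous_primitive 0)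

lemma stdGaussianCDF_stdGaussianCDFInv {p : ℝ} (hp : p ∈ Set.Ioo 0 1) :
    stdGaussianCDF (stdGaussianCDFInv p) = p := by
  refine Function.invFun_eq ?_
  obtain ⟨a, ha⟩ := (stdGaussianCDF_eq_cdf ▸ tendsto_cdf_atBot (gaussianReal 0 1))
    |>.eventually_lt_const hp.1 |>.exists
  obtain ⟨b, hb⟩ := (stdGaussianCDF_eq_cdf ▸ tendsto_cdf_atTop (gaussianReal 0 1))
    |>.eventually_const_lt hp.2 |>.exists
  obtain ⟨c, -, hc⟩ := intermediate_value_Icc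
    (stdGaussianCDF_strictMono.lt_iff_lt.1 (ha.trans hb)).le
    continuous_stdGaussianCDF.continuousOn ⟨ha.le, hb.le⟩
  exact ⟨c, hc⟩

end StdGaussianCDF

noncomputable def gaussDensity (n : ℕ) (t : EuclideanSpace ℝ (Fin n)) : ℝ :=
  (2 * π) ^ (-(n : ℝ) / 2) * Real.exp (-‖t‖ ^ 2 / 2)

section GaussianDensity

variable {n : ℕ}

lemma stdGaussian_eq_withDensity :
    stdGaussian n = volume.withDensity fun t => ENNReal.ofReal (gaussDensity n t) := rfl

lemma gaussDensity_nonneg (t : EuclideanSpace ℝ (Fin n)) : 0 ≤ gaussDensity n t := by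
  unfold gaussDensity; positivity

lemma continuous_gaussDensity : Continuous (gaussDensity n) := by
  unfold gaussDensity; fun_prop

lemma gaussDensity_toLp (y : Fin n → ℝ) :
    gaussDensity n (WithLp.toLp 2 y) = ∏ i, gaussianPDFReal 0 1 (y i) := by
  have hconst : (2 * π) ^ (-(n : ℝ) / 2) = (√(2 * π))⁻¹ ^ n := by
    rw [Real.sqrt_eq_rpow, ← Real.rpow_neg (by positivity), ← Real.rpow_natCast,
      ← Real.rpow_mul (by positivity)]
    ring_nf
  rw [gaussDensity, hconst, EuclideanSpace.real_norm_sq_eq, neg_div, Finset.sum_div,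
    ← Finset.sum_neg_distrib, Real.exp_sum]
  simp only [ProbabilityTheory.gaussianPDFReal_def, Finset.prod_mul_distrib, Finset.prod_const,
    Finset.card_univ, Fintype.card_fin, NNReal.coe_one, mul_one, sub_zero, neg_div]

lemma map_ofLp_stdGaussian :
    (stdGaussian n).map WithLp.ofLp = Measure.pi fun _ : Fin n => gaussianReal 0 1 := by
  refine (Measure.pi_eq fun s hs => ?_).symm
  have hbox : MeasurableSet (Set.univ.pi s) := MeasurableSet.univ_pi hs
  have hφ := ProbabilityTheory.integrable_gaussianPDFReal 0 1
  have hφ0 := ProbabilityTheory.gaussianPDFReal_nonneg 0 1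
  have hcov := (PiLp.volume_preserving_ofLp (Fin n)).setLIntegral_comp_preimage_emb
    (MeasurableEquiv.toLp 2 (Fin n → ℝ)).symm.measurableEmbedding
    (fun y => ENNReal.ofReal (gaussDensity n (WithLp.toLp 2 y))) (Set.univ.pi s)
  rw [Measure.map_apply (by fun_prop) hbox, stdGaussian_eq_withDensity,
    withDensity_apply _ (WithLp.measurable_ofLp _ _ hbox), hcov]
  simp_rw [gaussDensity_toLp]
  rw [volume_pi, Measure.restrict_pi_pi,
    ← ofReal_integral_eq_lintegral_ofReal (Integrable.fintype_prod fun i => hφ.restrict)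
      (ae_of_all _ fun y => Finset.prod_nonneg fun i _ => hφ0 (y i)),
    integral_fintype_prod_eq_prod,
    ENNReal.ofReal_prod_of_nonneg fun i _ => setIntegral_nonneg (hs i) fun x _ => hφ0 x]
  simp_rw [ProbabilityTheory.gaussianReal_apply_eq_integral 0 one_ne_zero]

theorem stdGaussian_eq_stdGaussian :
    stdGaussian n = ProbabilityTheory.stdGaussian (EuclideanSpace ℝ (Fin n)) := by
  rw [← ProbabilityTheory.map_pi_eq_stdGaussian, ← map_ofLp_stdGaussian,
    Measure.map_map (by fun_prop) (by fun_prop)]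
  exact Measure.map_id.symm

instance : IsProbabilityMeasure (stdGaussian n) := by
  rw [stdGaussian_eq_stdGaussian]; infer_instance

lemma integrable_gaussDensity : Integrable (gaussDensity n) := by
  have hfin : ∫⁻ t, ENNReal.ofReal (gaussDensity n t) ≠ ⊤ := by
    rw [← setLIntegral_univ, ← withDensity_apply _ MeasurableSet.univ,
      ← stdGaussian_eq_withDensity]
    exact measure_ne_top _ _
  simpa only [ENNReal.toReal_ofReal (gaussDensity_nonneg _)] using
    integrable_toReal_of_lintegral_ne_top
      continuous_gaussDensity.measurable.ennreal_ofReal.aemeasurable hfin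

lemma integral_stdGaussian (g : EuclideanSpace ℝ (Fin n) → ℝ) :
    ∫ t, g t ∂(stdGaussian n) = ∫ t, g t * gaussDensity n t := by
  rw [stdGaussian_eq_withDensity,
    integral_withDensity_eq_integral_toReal_smul continuous_gaussDensity.measurable.ennreal_ofReal
      (ae_of_all _ fun _ => ENNReal.ofReal_lt_top)]
  simp only [ENNReal.toReal_ofReal (gaussDensity_nonneg _), smul_eq_mul, mul_comm]

lemma integral_comp_add_stdGaussian (g : EuclideanSpace ℝ (Fin n) → ℝ)
    (δ : EuclideanSpace ℝ (Fin n)) :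
    ∫ t, g (δ + t) ∂(stdGaussian n) = ∫ s, g s * gaussDensity n (s - δ) := by
  rw [integral_stdGaussian, ← integral_sub_right_eq_self _ δ]
  simp only [add_sub_cancel]

lemma gaussDensity_sub (δ s : EuclideanSpace ℝ (Fin n)) :
    gaussDensity n (s - δ) = Real.exp (⟪δ, s⟫ - ‖δ‖ ^ 2 / 2) * gaussDensity n s := by
  simp only [gaussDensity]
  rw [norm_sub_sq_real, real_inner_comm, mul_left_comm (Real.exp _), ← Real.exp_add]
  congr 2
  ring

lemma stdGaussian_real_setOf_inner_le {u : EuclideanSpace ℝ (Fin n)} (hu : ‖u‖ = 1) (c : ℝ) :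
    (stdGaussian n).real {t | ⟪u, t⟫ ≤ c} = stdGaussianCDF c := by
  have hmap : (ProbabilityTheory.stdGaussian (EuclideanSpace ℝ (Fin n))).map (innerSL ℝ u) =
      gaussianReal 0 1 := by
    rw [ProbabilityTheory.IsGaussian.map_eq_gaussianReal,
      ProbabilityTheory.integral_strongDual_stdGaussian,
      ProbabilityTheory.variance_dual_stdGaussian, innerSL_apply_norm, hu]
    simp
  rw [stdGaussianCDF_eq_measureReal, ← hmap,
    map_measureReal_apply (by fun_prop) measurableSet_Iic, stdGaussian_eq_stdGaussian]
  rfl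

lemma setIntegral_setOf_inner_le_gaussDensity_sub {u : EuclideanSpace ℝ (Fin n)}
    (hu : ‖u‖ = 1) (c : ℝ) (δ : EuclideanSpace ℝ (Fin n)) :
    ∫ s in {s | ⟪u, s⟫ ≤ c}, gaussDensity n (s - δ) = stdGaussianCDF (c - ⟪u, δ⟫) := by
  have hH : MeasurableSet {s : EuclideanSpace ℝ (Fin n) | ⟪u, s⟫ ≤ c} :=
    measurableSet_le (by fun_prop) measurable_const
  have hH' : MeasurableSet {t : EuclideanSpace ℝ (Fin n) | ⟪u, t⟫ ≤ c - ⟪u, δ⟫} :=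
    measurableSet_le (by fun_prop) measurable_const
  have hshift : ∀ t, {s | ⟪u, s⟫ ≤ c}.indicator (1 : EuclideanSpace ℝ (Fin n) → ℝ) (δ + t) =
      {t | ⟪u, t⟫ ≤ c - ⟪u, δ⟫}.indicator 1 t := fun t => by
    simp only [Set.indicator_apply, Set.mem_ofPred_eq, inner_add_right, le_sub_iff_add_le',
      Pi.one_apply]
  rw [← stdGaussian_real_setOf_inner_le hu, ← integral_indicator_one hH',
    ← integral_congr_ae (ae_of_all _ hshift), integral_comp_add_stdGaussian,
    integral_indicator_one_mul hH]

end GaussianDensity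

noncomputable def weierstrassTransform {n : ℕ} (f : EuclideanSpace ℝ (Fin n) → ℝ)
    (x : EuclideanSpace ℝ (Fin n)) : ℝ :=
  ∫ t, f (x + t) ∂(stdGaussian n)

section WeierstrassTransform

variable {n : ℕ} {f : EuclideanSpace ℝ (Fin n) → ℝ} {x : EuclideanSpace ℝ (Fin n)} {a : ℝ}

lemma weierstrassTransform_add_eq_integral (f : EuclideanSpace ℝ (Fin n) → ℝ)
    (x δ : EuclideanSpace ℝ (Fin n)) :
    weierstrassTransform f (x + δ) = ∫ s, f (x + s) * gaussDensity n (s - δ) := by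
  simp_rw [weierstrassTransform, add_assoc]
  exact integral_comp_add_stdGaussian (fun s => f (x + s)) δ

lemma weierstrassTransform_eq_integral (f : EuclideanSpace ℝ (Fin n) → ℝ)
    (x : EuclideanSpace ℝ (Fin n)) :
    weierstrassTransform f x = ∫ s, f (x + s) * gaussDensity n s := by
  simpa using weierstrassTransform_add_eq_integral f x 0

theorem stdGaussianCDF_sub_norm_le_weierstrassTransform (hf : Measurable f)
    (hf01 : ∀ t, f t ∈ Set.Icc 0 1) (ha : weierstrassTransform f x = stdGaussianCDF a)
    (δ : EuclideanSpace ℝ (Fin n)) :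
    stdGaussianCDF (a - ‖δ‖) ≤ weierstrassTransform f (x + δ) := by
  rcases eq_or_ne δ 0 with rfl | hδ
  · simp [ha]
  obtain ⟨u, hu, hδu⟩ := exists_norm_eq_one_inner_eq_norm_mul hδ
  have hH : MeasurableSet {s : EuclideanSpace ℝ (Fin n) | ⟪u, s⟫ ≤ a} :=
    measurableSet_le (by fun_prop) measurable_const
  have key := neyman_pearson_lower (f := fun s => f (x + s)) hH
    (Real.exp_pos (‖δ‖ * a - ‖δ‖ ^ 2 / 2)).le
    integrable_gaussDensity (integrable_gaussDensity.comp_sub_right δ)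
    (hf.comp (measurable_const_add x)).aestronglyMeasurable (fun s => hf01 (x + s)) ?_ ?_ ?_
  · rwa [setIntegral_setOf_inner_le_gaussDensity_sub hu, real_inner_comm, hδu,
      real_inner_self_eq_norm_sq, hu, one_pow, mul_one,
      ← weierstrassTransform_add_eq_integral] at key
  · intro s hs
    rw [gaussDensity_sub, hδu]
    gcongr
    exacts [gaussDensity_nonneg s, hs]
  · intro s hs
    rw [gaussDensity_sub, hδu]
    gcongr
    exacts [gaussDensity_nonneg s, (not_le.1 hs).le]
  · rw [← weierstrassTransform_eq_integral, ha]
    simpa using (setIntegral_setOf_inner_le_gaussDensity_sub hu a 0).le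

theorem weierstrassTransform_le_stdGaussianCDF_add_norm (hf : Measurable f)
    (hf01 : ∀ t, f t ∈ Set.Icc 0 1) (ha : weierstrassTransform f x = stdGaussianCDF a)
    (δ : EuclideanSpace ℝ (Fin n)) :
    weierstrassTransform f (x + δ) ≤ stdGaussianCDF (a + ‖δ‖) := by
  rcases eq_or_ne δ 0 with rfl | hδ
  · simp [ha]
  obtain ⟨u, hu, hδu⟩ := exists_norm_eq_one_inner_eq_norm_mul hδ
  have hu' : ‖-u‖ = 1 := by rwa [norm_neg]
  have hH : MeasurableSet {s : EuclideanSpace ℝ (Fin n) | ⟪-u, s⟫ ≤ a} :=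
    measurableSet_le (by fun_prop) measurable_const
  have key := neyman_pearson_upper (f := fun s => f (x + s)) hH
    (Real.exp_pos (‖δ‖ * -a - ‖δ‖ ^ 2 / 2)).le
    integrable_gaussDensity (integrable_gaussDensity.comp_sub_right δ)
    (hf.comp (measurable_const_add x)).aestronglyMeasurable (fun s => hf01 (x + s)) ?_ ?_ ?_
  · rwa [setIntegral_setOf_inner_le_gaussDensity_sub hu', real_inner_comm, hδu, inner_neg_right,
      real_inner_self_eq_norm_sq, hu, one_pow, mul_neg_one, sub_neg_eq_add,
      ← weierstrassTransform_add_eq_integral] at key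
  · intro s hs
    rw [Set.mem_ofPred_eq, inner_neg_left] at hs
    rw [gaussDensity_sub, hδu]
    gcongr
    exacts [gaussDensity_nonneg s, by linarith]
  · intro s hs
    rw [Set.mem_ofPred_eq, inner_neg_left, not_le] at hs
    rw [gaussDensity_sub, hδu]
    gcongr
    exacts [gaussDensity_nonneg s, by linarith]
  · rw [← weierstrassTransform_eq_integral, ha]
    simpa using (setIntegral_setOf_inner_le_gaussDensity_sub hu' a 0).ge

end WeierstrassTransform

theorem smoothing_robustness_radius_general (n : ℕ)
    (fA fB : EuclideanSpace ℝ (Fin n) → ℝ)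
    (hfA : Measurable fA) (hfB : Measurable fB)
    (hfA01 : ∀ t, fA t ∈ Set.Icc (0 : ℝ) 1) (hfB01 : ∀ t, fB t ∈ Set.Icc (0 : ℝ) 1)
    (fhatA fhatB : EuclideanSpace ℝ (Fin n) → ℝ)
    (hfhatA : ∀ x, fhatA x = ∫ t, fA (x + t) ∂(stdGaussian n))
    (hfhatB : ∀ x, fhatB x = ∫ t, fB (x + t) ∂(stdGaussian n))
    (hA01 : ∀ x, fhatA x ∈ Set.Ioo (0 : ℝ) 1)
    (hB01 : ∀ x, fhatB x ∈ Set.Ioo (0 : ℝ) 1)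
    (x : EuclideanSpace ℝ (Fin n)) (pA pB : ℝ)
    (hpA : pA = fhatA x) (hpB : pB = fhatB x)
    (δ : EuclideanSpace ℝ (Fin n)) (hflip : fhatA (x + δ) ≤ fhatB (x + δ)) :
    ‖δ‖ ≥ (1 / 2) * (stdGaussianCDFInv pA - stdGaussianCDFInv pB) := by
  obtain rfl : fhatA = weierstrassTransform fA := funext hfhatA
  obtain rfl : fhatB = weierstrassTransform fB := funext hfhatB
  have hA : weierstrassTransform fA x = stdGaussianCDF (stdGaussianCDFInv pA) := by
    rw [stdGaussianCDF_stdGaussianCDFInv (hpA ▸ hA01 x), hpA]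
  have hB : weierstrassTransform fB x = stdGaussianCDF (stdGaussianCDFInv pB) := by
    rw [stdGaussianCDF_stdGaussianCDFInv (hpB ▸ hB01 x), hpB]
  have hΦ := (stdGaussianCDF_sub_norm_le_weierstrassTransform hfA hfA01 hA δ).trans
    (hflip.trans (weierstrassTransform_le_stdGaussianCDF_add_norm hfB hfB01 hB δ))
  have hAB := stdGaussianCDF_strictMono.le_iff_le.1 hΦ
  linarith

/-- if the Weierstrass transforms `f̂_A, f̂_B` of measurable functions
`f_A, f_B : ℝⁿ → [0,1]` take values in `(0,1)`, `p_A = f̂_A(x)`, `p_B = f̂_B(x)` with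
`p_B ≤ p_A`, then any perturbation `δ` with `f̂_A(x+δ) ≤ f̂_B(x+δ)` satisfies
`‖δ‖₂ ≥ (1/2)(Φ⁻¹(p_A) - Φ⁻¹(p_B))`. -/
theorem smoothing_robustness_radius (n : ℕ)
    (fA fB : EuclideanSpace ℝ (Fin n) → ℝ)
    (hfA : Measurable fA) (hfB : Measurable fB)
    (hfA01 : ∀ t, fA t ∈ Set.Icc (0 : ℝ) 1) (hfB01 : ∀ t, fB t ∈ Set.Icc (0 : ℝ) 1)
    (fhatA fhatB : EuclideanSpace ℝ (Fin n) → ℝ)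
    (hfhatA : ∀ x, fhatA x = ∫ t, fA (x + t) ∂(stdGaussian n))
    (hfhatB : ∀ x, fhatB x = ∫ t, fB (x + t) ∂(stdGaussian n))
    (hA01 : ∀ x, fhatA x ∈ Set.Ioo (0 : ℝ) 1)
    (hB01 : ∀ x, fhatB x ∈ Set.Ioo (0 : ℝ) 1)
    (x : EuclideanSpace ℝ (Fin n)) (pA pB : ℝ)
    (hpA : pA = fhatA x) (hpB : pB = fhatB x) (hle : pB ≤ pA)
    (δ : EuclideanSpace ℝ (Fin n)) (hflip : fhatA (x + δ) ≤ fhatB (x + δ)) :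
    ‖δ‖ ≥ (1 / 2) * (stdGaussianCDFInv pA - stdGaussianCDFInv pB) :=
  smoothing_robustness_radius_general n fA fB hfA hfB hfA01 hfB01 fhatA fhatB hfhatA hfhatB hA01
    hB01 x pA pB hpA hpB δ hflip
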